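/- For the map from (φ, θ, ψ, T) ∈ (-π/2,π/2)² × S¹ × (0,∞) to (T·R(φ,θ,ψ)e₃, ψ) ∈ ℝ³ × S¹, the first component has third coordinate T cosφ cosθ > 0, and the map is injective on this domain. -/
import Mathlib


open Real Matrix

noncomputable def Rx (φ : ℝ) : Matrix (Fin 3) (Fin 3) ℝ :=
  !![1, 0, 0; 0, Real.cos φ, -Real.sin φ; 0, Real.sin φ, Real.cos φ]

noncomputable def Ry (θ : ℝ) : Matrix (Fin 3) (Fin 3) ℝ :=
  !![Real.cos θ, 0, Real.sin θ; 0, 1, 0; -Real.sin θ, 0, Real.cos θ]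

noncomputable def Rz (ψ : ℝ) : Matrix (Fin 3) (Fin 3) ℝ :=
  !![Real.cos ψ, -Real.sin ψ, 0; Real.sin ψ, Real.cos ψ, 0; 0, 0, 1]

/-- Roll-pitch-yaw rotation matrix. -/
noncomputable def Rrpy (φ θ ψ : ℝ) : Matrix (Fin 3) (Fin 3) ℝ := Rz ψ * Ry θ * Rx φ

/-- Third standard basis vector. -/
def e₃ : Fin 3 → ℝ := ![0, 0, 1]


lemma compv0 (φ θ ψ : ℝ) :
    (Rrpy φ θ ψ).mulVec e₃ 0
      = Real.sin ψ * Real.sin φ + Real.cos ψ * Real.sin θ * Real.cos φ := by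
  simp [Rrpy, Rx, Ry, Rz, Matrix.mulVec, e₃, dotProduct, Fin.sum_univ_three,
    Matrix.mul_apply]

lemma compv1 (φ θ ψ : ℝ) :
    (Rrpy φ θ ψ).mulVec e₃ 1
      = Real.sin ψ * Real.sin θ * Real.cos φ - Real.cos ψ * Real.sin φ := by
  simp [Rrpy, Rx, Ry, Rz, Matrix.mulVec, e₃, dotProduct, Fin.sum_univ_three,
    Matrix.mul_apply]
  ring

lemma compv2 (φ θ ψ : ℝ) :
    (Rrpy φ θ ψ).mulVec e₃ 2 = Real.cos φ * Real.cos θ := by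
  simp [Rrpy, Rx, Ry, Rz, Matrix.mulVec, e₃, dotProduct, Fin.sum_univ_three,
    Matrix.mul_apply]
  ring

lemma comp0 (φ θ ψ T : ℝ) :
    (T • (Rrpy φ θ ψ).mulVec e₃) 0
      = T * (Real.sin ψ * Real.sin φ + Real.cos ψ * Real.sin θ * Real.cos φ) := by
  rw [Pi.smul_apply, compv0, smul_eq_mul]

lemma comp1 (φ θ ψ T : ℝ) :
    (T • (Rrpy φ θ ψ).mulVec e₃) 1
      = T * (Real.sin ψ * Real.sin θ * Real.cos φ - Real.cos ψ * Real.sin φ) := by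
  rw [Pi.smul_apply, compv1, smul_eq_mul]

lemma comp2 (φ θ ψ T : ℝ) :
    (T • (Rrpy φ θ ψ).mulVec e₃) 2 = T * (Real.cos φ * Real.cos θ) := by
  rw [Pi.smul_apply, compv2, smul_eq_mul]

/-- The map `(φ,θ,ψ,T) ↦ (T·R(φ,θ,ψ)e₃, ψ)` on
`(-π/2,π/2)² × S¹ × (0,∞)` has third thrust coordinate `T cosφ cosθ > 0`
and is injective: thrust vector together with yaw determines roll, pitch,
yaw and thrust. -/
theorem thrust_map_injective :
    (∀ φ θ ψ T : ℝ, φ ∈ Set.Ioo (-(π / 2)) (π / 2) → θ ∈ Set.Ioo (-(π / 2)) (π / 2) →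
      0 < T →
      (T • (Rrpy φ θ ψ).mulVec e₃) 2 = T * (Real.cos φ * Real.cos θ) ∧
        0 < (T • (Rrpy φ θ ψ).mulVec e₃) 2) ∧
    (∀ φ₁ θ₁ ψ₁ T₁ φ₂ θ₂ ψ₂ T₂ : ℝ,
      φ₁ ∈ Set.Ioo (-(π / 2)) (π / 2) → θ₁ ∈ Set.Ioo (-(π / 2)) (π / 2) →
      ψ₁ ∈ Set.Ico 0 (2 * π) → 0 < T₁ →
      φ₂ ∈ Set.Ioo (-(π / 2)) (π / 2) → θ₂ ∈ Set.Ioo (-(π / 2)) (π / 2) →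
      ψ₂ ∈ Set.Ico 0 (2 * π) → 0 < T₂ →
      T₁ • (Rrpy φ₁ θ₁ ψ₁).mulVec e₃ = T₂ • (Rrpy φ₂ θ₂ ψ₂).mulVec e₃ →
      ψ₁ = ψ₂ →
      φ₁ = φ₂ ∧ θ₁ = θ₂ ∧ ψ₁ = ψ₂ ∧ T₁ = T₂) := by
  constructor
  · intro φ θ ψ T hφ hθ hT
    refine ⟨comp2 φ θ ψ T, ?_⟩
    rw [comp2]
    have hcφ : 0 < Real.cos φ := Real.cos_pos_of_mem_Ioo hφ
    have hcθ : 0 < Real.cos θ := Real.cos_pos_of_mem_Ioo hθ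
    positivity
  · intro φ₁ θ₁ ψ₁ T₁ φ₂ θ₂ ψ₂ T₂ hφ₁ hθ₁ hψ₁ hT₁ hφ₂ hθ₂ hψ₂ hT₂ hEq hψ
    subst hψ
    have h0 := congrFun hEq 0
    have h1 := congrFun hEq 1
    have h2 := congrFun hEq 2
    rw [comp0, comp0] at h0
    rw [comp1, comp1] at h1
    rw [comp2, comp2] at h2
    have hpyψ := Real.sin_sq_add_cos_sq ψ₁
    have hpyθ₁ := Real.sin_sq_add_cos_sq θ₁
    have hpyθ₂ := Real.sin_sq_add_cos_sq θ₂
    have hpyφ₁ := Real.sin_sq_add_cos_sq φ₁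
    have hpyφ₂ := Real.sin_sq_add_cos_sq φ₂
    have ha : T₁ * (Real.sin θ₁ * Real.cos φ₁) = T₂ * (Real.sin θ₂ * Real.cos φ₂) := by
      linear_combination Real.cos ψ₁ * h0 + Real.sin ψ₁ * h1
        - (T₁ * (Real.sin θ₁ * Real.cos φ₁) - T₂ * (Real.sin θ₂ * Real.cos φ₂)) * hpyψ
    have hb : T₁ * Real.sin φ₁ = T₂ * Real.sin φ₂ := by
      linear_combination Real.sin ψ₁ * h0 - Real.cos ψ₁ * h1
        - (T₁ * Real.sin φ₁ - T₂ * Real.sin φ₂) * hpyψ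
    have hc : T₁ * (Real.cos φ₁ * Real.cos θ₁) = T₂ * (Real.cos φ₂ * Real.cos θ₂) := h2
    have hs1 : T₁ ^ 2 = (T₁ * (Real.sin θ₁ * Real.cos φ₁)) ^ 2 + (T₁ * Real.sin φ₁) ^ 2
        + (T₁ * (Real.cos φ₁ * Real.cos θ₁)) ^ 2 := by
      linear_combination (-(T₁ ^ 2 * Real.cos φ₁ ^ 2)) * hpyθ₁ - T₁ ^ 2 * hpyφ₁
    have hs2 : T₂ ^ 2 = (T₂ * (Real.sin θ₂ * Real.cos φ₂)) ^ 2 + (T₂ * Real.sin φ₂) ^ 2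
        + (T₂ * (Real.cos φ₂ * Real.cos θ₂)) ^ 2 := by
      linear_combination (-(T₂ ^ 2 * Real.cos φ₂ ^ 2)) * hpyθ₂ - T₂ ^ 2 * hpyφ₂
    have hT2 : T₁ ^ 2 = T₂ ^ 2 := by
      linear_combination hs1 - hs2
        + (T₁ * (Real.sin θ₁ * Real.cos φ₁) + T₂ * (Real.sin θ₂ * Real.cos φ₂)) * ha
        + (T₁ * Real.sin φ₁ + T₂ * Real.sin φ₂) * hb
        + (T₁ * (Real.cos φ₁ * Real.cos θ₁) + T₂ * (Real.cos φ₂ * Real.cos θ₂)) * hc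
    have hT : T₁ = T₂ := by
      have hprod : (T₁ - T₂) * (T₁ + T₂) = 0 := by linear_combination hT2
      rcases mul_eq_zero.1 hprod with h | h
      · linarith
      · linarith
    subst hT
    have hsφ : Real.sin φ₁ = Real.sin φ₂ := mul_left_cancel₀ (ne_of_gt hT₁) hb
    have hφ : φ₁ = φ₂ :=
      Real.injOn_sin (Set.mem_Icc_of_Ioo hφ₁) (Set.mem_Icc_of_Ioo hφ₂) hsφ
    subst hφ
    have hcφ : 0 < Real.cos φ₁ := Real.cos_pos_of_mem_Ioo hφ₁
    have hsθ : Real.sin θ₁ = Real.sin θ₂ := by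
      have h := mul_left_cancel₀ (ne_of_gt hT₁) ha
      exact mul_right_cancel₀ (ne_of_gt hcφ) h
    have hθ : θ₁ = θ₂ :=
      Real.injOn_sin (Set.mem_Icc_of_Ioo hθ₁) (Set.mem_Icc_of_Ioo hθ₂) hsθ
    exact ⟨rfl, hθ, rfl, rfl⟩
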